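/- arXiv:2403.09690 — 3 statements merged into one kernel-verified Lean document; each statement's English description precedes it below -/
import Mathlib

section
/- For every 2×2 complex matrix φ and every 4×4 complex matrix ρ, the teleportation channel with resource ρ acts as a Pauli channel whose coefficients are the Bell-diagonal entries of ρ: Σ_{σ∈{I,X,Y,Z}} K_σ (φ ⊗ ρ) K_σ† = Σ_{σ∈{I,X,Y,Z}} ⟨Φ^σ| ρ |Φ^σ⟩ · σ φ σ. -/
open Matrix Kronecker

noncomputable section

/-- Standard basis ket |0⟩ of a qubit ℂ². -/
def e0 : Fin 2 → ℂ := ![1, 0]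

/-- Standard basis ket |1⟩ of a qubit ℂ². -/
def e1 : Fin 2 → ℂ := ![0, 1]

/-- The standard basis kets, indexed: |j⟩ for j ∈ {0,1}. -/
def eb : Fin 2 → Fin 2 → ℂ := ![e0, e1]

/-- Tensor (Kronecker) product of two one-qubit vectors. -/
def tens (v w : Fin 2 → ℂ) : Fin 2 × Fin 2 → ℂ := fun p => v p.1 * w p.2

/-- The maximally entangled state |Φ⟩ = (1/√2)(|00⟩ + |11⟩). -/
def ketPhi : Fin 2 × Fin 2 → ℂ :=
  ((1 / Real.sqrt 2 : ℝ) : ℂ) • (tens e0 e0 + tens e1 e1)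

/-- The non-maximally entangled state |Φ^k⟩ = K(|00⟩ + k|11⟩), K = 1/√(1+k²). -/
def ketPhiK (k : ℝ) : Fin 2 × Fin 2 → ℂ :=
  ((1 / Real.sqrt (1 + k ^ 2) : ℝ) : ℂ) • (tens e0 e0 + (k : ℂ) • tens e1 e1)

/-- Density operator |v⟩⟨v| of a pure state. -/
def dens {ι : Type*} (v : ι → ℂ) : Matrix ι ι ℂ := vecMulVec v (star v)

/-- Density operator Φ = |Φ⟩⟨Φ|. -/
def PhiD : Matrix (Fin 2 × Fin 2) (Fin 2 × Fin 2) ℂ := dens ketPhi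

/-- Density operator Φ^k = |Φ^k⟩⟨Φ^k|. -/
def PhiKD (k : ℝ) : Matrix (Fin 2 × Fin 2) (Fin 2 × Fin 2) ℂ := dens (ketPhiK k)

/-- The overlap ⟨v| M |v⟩. -/
def ov {ι : Type*} [Fintype ι] (v : ι → ℂ) (M : Matrix ι ι ℂ) : ℂ :=
  star v ⬝ᵥ M.mulVec v

/-- Pauli X. -/
def Xm : Matrix (Fin 2) (Fin 2) ℂ := !![0, 1; 1, 0]

/-- Pauli Y. -/
def Ym : Matrix (Fin 2) (Fin 2) ℂ := !![0, -Complex.I; Complex.I, 0]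

/-- Pauli Z. -/
def Zm : Matrix (Fin 2) (Fin 2) ℂ := !![1, 0; 0, -1]

/-- The Paulis I, X, Y, Z indexed by Fin 4. -/
def pauli : Fin 4 → Matrix (Fin 2) (Fin 2) ℂ := ![1, Xm, Ym, Zm]

/-- The Bell state |Φ^σ⟩ = (σ ⊗ I)|Φ⟩ for σ the i-th Pauli. -/
def bell (i : Fin 4) : Fin 2 × Fin 2 → ℂ :=
  ((pauli i) ⊗ₖ (1 : Matrix (Fin 2) (Fin 2) ℂ)).mulVec ketPhi

/-- The 2×8 matrix ⟨v| ⊗ I₂ acting on ℂ²⊗ℂ²⊗ℂ² (bra on the first two factors). -/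
def braI (v : Fin 2 × Fin 2 → ℂ) : Matrix (Fin 2) (Fin 2 × Fin 2 × Fin 2) ℂ :=
  Matrix.of fun i p => star (v (p.1, p.2.1)) * (if i = p.2.2 then 1 else 0)

/-- Teleportation Kraus operator K_σ = σ · (⟨Φ^σ| ⊗ I₂). -/
def Kmat (σ : Fin 4) : Matrix (Fin 2) (Fin 2 × Fin 2 × Fin 2) ℂ :=
  pauli σ * braI (bell σ)

/-- Teleportation channel with resource state ρ: E_tel^ρ(φ) = Σ_σ K_σ (φ ⊗ ρ) K_σ†. -/
def Etel (ρ : Matrix (Fin 2 × Fin 2) (Fin 2 × Fin 2) ℂ)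
    (φ : Matrix (Fin 2) (Fin 2) ℂ) : Matrix (Fin 2) (Fin 2) ℂ :=
  ∑ σ : Fin 4, Kmat σ * (φ ⊗ₖ ρ) * (Kmat σ)ᴴ

/-- Hadamard gate. -/
def Hm : Matrix (Fin 2) (Fin 2) ℂ := ((1 / Real.sqrt 2 : ℝ) : ℂ) • !![1, 1; 1, -1]

/-- Phase gate S = diag(1, i). -/
def Sm : Matrix (Fin 2) (Fin 2) ℂ := !![1, 0; 0, Complex.I]

lemma bell_eq (σ : Fin 4) (p : Fin 2 × Fin 2) :
    bell σ p = ((1 / Real.sqrt 2 : ℝ) : ℂ) * pauli σ p.1 p.2 := by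
  obtain ⟨a, b⟩ := p
  simp only [bell, ketPhi, tens, e0, e1, Matrix.mulVec, dotProduct, Fintype.sum_prod_type,
    Fin.sum_univ_two, kroneckerMap_apply, Matrix.one_apply, Pi.smul_apply, Pi.add_apply,
    smul_eq_mul]
  fin_cases a <;> fin_cases b <;> fin_cases σ <;>
    simp [pauli, Xm, Ym, Zm] <;> ring
lemma Kmat_eq (σ : Fin 4) (i : Fin 2) (p : Fin 2 × Fin 2 × Fin 2) :
    Kmat σ i p
      = ((1 / Real.sqrt 2 : ℝ) : ℂ) * pauli σ i p.2.2 * star (pauli σ p.1 p.2.1) := by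
  simp only [Kmat, Matrix.mul_apply, braI, Matrix.of_apply, bell_eq, star_mul',
    Complex.star_def, Complex.conj_ofReal, mul_ite, mul_one, mul_zero,
    Finset.sum_ite_eq, Finset.sum_ite_eq', Finset.mem_univ, if_true]
  ring
set_option maxHeartbeats 4000000 in
lemma twirl (φ : Matrix (Fin 2) (Fin 2) ℂ) (i j b d x y : Fin 2) :
    ∑ σ : Fin 4, pauli σ i x * star (pauli σ j y) *
        (∑ a : Fin 2, ∑ c : Fin 2, star (pauli σ a b) * φ a c * pauli σ c d)
      = ∑ σ : Fin 4, star (pauli σ b x) * pauli σ d y *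
        (∑ a : Fin 2, ∑ c : Fin 2, pauli σ i a * φ a c * pauli σ c j) := by
  fin_cases i <;> fin_cases j <;> fin_cases b <;> fin_cases d <;> fin_cases x <;> fin_cases y <;>
    simp [pauli, Xm, Ym, Zm, Fin.sum_univ_two, Fin.sum_univ_four, Matrix.one_apply] <;>
    (try (ring_nf; simp [Complex.I_sq]; try ring))
lemma term_lhs (φ : Matrix (Fin 2) (Fin 2) ℂ) (ρ : Matrix (Fin 2 × Fin 2) (Fin 2 × Fin 2) ℂ)
    (σ : Fin 4) (i j : Fin 2) :
    (Kmat σ * (φ ⊗ₖ ρ) * (Kmat σ)ᴴ) i j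
      = ∑ b : Fin 2, ∑ x : Fin 2, ∑ d : Fin 2, ∑ y : Fin 2,
          (((1 / Real.sqrt 2 : ℝ) : ℂ) * ((1 / Real.sqrt 2 : ℝ) : ℂ)) * ρ (b, x) (d, y) *
          (pauli σ i x * star (pauli σ j y) *
            ∑ a : Fin 2, ∑ c : Fin 2, star (pauli σ a b) * φ a c * pauli σ c d) := by
  simp only [Matrix.mul_apply, Matrix.conjTranspose_apply, Kmat_eq, kroneckerMap_apply,
    Fintype.sum_prod_type, star_mul', Complex.star_def, Complex.conj_ofReal, Complex.conj_conj,
    Fin.sum_univ_two, Finset.sum_mul, Finset.mul_sum]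
  ring
set_option maxHeartbeats 4000000 in
lemma term_rhs (ρ : Matrix (Fin 2 × Fin 2) (Fin 2 × Fin 2) ℂ)
    (φ : Matrix (Fin 2) (Fin 2) ℂ) (σ : Fin 4) (i j : Fin 2) :
    (ov (bell σ) ρ • (pauli σ * φ * pauli σ)) i j
      = ∑ b : Fin 2, ∑ x : Fin 2, ∑ d : Fin 2, ∑ y : Fin 2,
          (((1 / Real.sqrt 2 : ℝ) : ℂ) * ((1 / Real.sqrt 2 : ℝ) : ℂ)) * ρ (b, x) (d, y) *
          (star (pauli σ b x) * pauli σ d y *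
            ∑ a : Fin 2, ∑ c : Fin 2, pauli σ i a * φ a c * pauli σ c j) := by
  simp only [Matrix.smul_apply, smul_eq_mul, ov, dotProduct, Matrix.mulVec, Matrix.mul_apply,
    Pi.star_apply, bell_eq, Fintype.sum_prod_type, star_mul', Complex.star_def, Complex.conj_ofReal,
    Fin.sum_univ_two, Finset.sum_mul, Finset.mul_sum]
  ring
lemma sum_swap5 (F : Fin 4 → Fin 2 → Fin 2 → Fin 2 → Fin 2 → ℂ) :
    ∑ σ : Fin 4, ∑ b : Fin 2, ∑ x : Fin 2, ∑ d : Fin 2, ∑ y : Fin 2, F σ b x d y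
      = ∑ b : Fin 2, ∑ x : Fin 2, ∑ d : Fin 2, ∑ y : Fin 2, ∑ σ : Fin 4, F σ b x d y := by
  rw [Finset.sum_comm]
  refine Finset.sum_congr rfl fun b _ => ?_
  rw [Finset.sum_comm]
  refine Finset.sum_congr rfl fun x _ => ?_
  rw [Finset.sum_comm]
  refine Finset.sum_congr rfl fun d _ => ?_
  rw [Finset.sum_comm]

set_option maxHeartbeats 1000000 in
/-- The teleportation channel with resource ρ is the Pauli channel with
Bell-diagonal coefficients of ρ. -/
theorem teleportation_is_pauli_channel
    (φ : Matrix (Fin 2) (Fin 2) ℂ) (ρ : Matrix (Fin 2 × Fin 2) (Fin 2 × Fin 2) ℂ) :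
    ∑ σ : Fin 4, Kmat σ * (φ ⊗ₖ ρ) * (Kmat σ)ᴴ
      = ∑ σ : Fin 4, ov (bell σ) ρ • (pauli σ * φ * pauli σ) := by
  ext i j
  simp only [Matrix.sum_apply, term_lhs, term_rhs]
  rw [sum_swap5, sum_swap5]
  refine Finset.sum_congr rfl fun b _ => ?_
  refine Finset.sum_congr rfl fun x _ => ?_
  refine Finset.sum_congr rfl fun d _ => ?_
  refine Finset.sum_congr rfl fun y _ => ?_
  rw [← Finset.mul_sum, ← Finset.mul_sum]
  exact congrArg _ (twirl φ i j b d x y)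
end
end

section
/- For every real number k ≥ 0 and every 2×2 complex matrix φ, teleportation with the non-maximally entangled resource Φ^k is a Pauli-Z dephasing channel: E_tel^{Φ^k}(φ) = Σ_{σ∈{I,X,Y,Z}} K_σ (φ ⊗ Φ^k) K_σ† = ((k+1)²/(2(k²+1))) · φ + ((k−1)²/(2(k²+1))) · Z φ Z. -/
open Matrix Kronecker

noncomputable section

/-
Write a pure resource as `|ψ⟩ = vec N`, i.e. `ψ (x, y) = N y x`. Because `|Φ^σ⟩` has coefficient
matrix `σ / √2`, the Bell outcome `σ` followed by the correction `σ` acts on the input as the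
Kraus operator `σ N σ† / √2`. For `Φ^k` the
coefficient matrix is `N = K·diag(1, k) = a I + b Z`; conjugation by `X` or `Y` flips the sign of
`b` and conjugation by `I` or `Z` does not, so the four Kraus terms pair up, the cross terms
cancel, and what remains is `2a² φ + 2b² Z φ Z`.
-/

lemma ketPhi_apply (p : Fin 2 × Fin 2) :
    ketPhi p = ((1 / √2 : ℝ) : ℂ) * (1 : Matrix (Fin 2) (Fin 2) ℂ) p.1 p.2 := by
  obtain ⟨i, j⟩ := p
  fin_cases i <;> fin_cases j <;> simp [ketPhi, tens, e0, e1]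

lemma kronecker_one_mulVec_ketPhi (U : Matrix (Fin 2) (Fin 2) ℂ) (p : Fin 2 × Fin 2) :
    ((U ⊗ₖ 1) *ᵥ ketPhi) p = ((1 / √2 : ℝ) : ℂ) * U p.1 p.2 := by
  simp [mulVec, dotProduct, Fintype.sum_prod_type, kroneckerMap_apply, ketPhi_apply, one_apply,
    mul_comm]

lemma mul_braI_kronecker_one_mulVec_ketPhi (U : Matrix (Fin 2) (Fin 2) ℂ) :
    U * braI ((U ⊗ₖ 1) *ᵥ ketPhi)
      = ((1 / √2 : ℝ) : ℂ) • of fun a p => star (U p.1 p.2.1) * U a p.2.2 := by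
  ext a p
  simp [mul_apply, braI, kronecker_one_mulVec_ketPhi]
  ring

lemma star_ofReal_one_div_sqrt_two_mul_self :
    star ((1 / √2 : ℝ) : ℂ) * ((1 / √2 : ℝ) : ℂ) = 1 / 2 := by
  rw [Complex.star_def, Complex.conj_ofReal, ← Complex.ofReal_mul, ← sq, div_pow,
    Real.sq_sqrt zero_le_two]
  norm_num

lemma mul_braI_mul_kronecker_dens_vec_mul_conjTranspose (U N φ : Matrix (Fin 2) (Fin 2) ℂ) :
    U * braI ((U ⊗ₖ 1) *ᵥ ketPhi) * (φ ⊗ₖ dens (vec N)) * (U * braI ((U ⊗ₖ 1) *ᵥ ketPhi))ᴴ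
      = (1 / 2 : ℂ) • (U * N * Uᴴ * φ * (U * N * Uᴴ)ᴴ) := by
  simp only [mul_braI_kronecker_one_mulVec_ketPhi, conjTranspose_smul, Matrix.smul_mul,
    Matrix.mul_smul, smul_smul, star_ofReal_one_div_sqrt_two_mul_self]
  ext a b
  simp [dens, mul_apply, Fintype.sum_prod_type, Fin.sum_univ_two, vecMulVec_apply,
    kroneckerMap_apply]
  ring

theorem Etel_dens_vec (N φ : Matrix (Fin 2) (Fin 2) ℂ) :
    Etel (dens (vec N)) φ
      = (1 / 2 : ℂ) • ∑ σ, pauli σ * N * (pauli σ)ᴴ * φ * (pauli σ * N * (pauli σ)ᴴ)ᴴ := by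
  simp only [Etel, Kmat, bell, mul_braI_mul_kronecker_dens_vec_mul_conjTranspose,
    Finset.smul_sum]

lemma pauli_mul_conjTranspose_self (σ : Fin 4) : pauli σ * (pauli σ)ᴴ = 1 := by
  fin_cases σ <;> ext i j <;> fin_cases i <;> fin_cases j <;> 
    simp [pauli, Xm, Ym, Zm, mul_apply, Fin.sum_univ_two]

lemma pauli_mul_Zm_mul_conjTranspose (σ : Fin 4) :
    pauli σ * Zm * (pauli σ)ᴴ = (![1, -1, -1, 1] σ : ℂ) • Zm := by
  fin_cases σ <;> ext i j <;> fin_cases i <;> fin_cases j <;> 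
    simp [pauli, Xm, Ym, Zm, mul_apply, Fin.sum_univ_two]

lemma pauli_mul_smul_one_add_smul_Zm_mul_conjTranspose (σ : Fin 4) (a b : ℂ) :
    pauli σ * (a • 1 + b • Zm) * (pauli σ)ᴴ = a • 1 + (![1, -1, -1, 1] σ * b) • Zm := by
  rw [mul_add, add_mul, mul_smul_comm, mul_one, smul_mul_assoc, pauli_mul_conjTranspose_self,
    mul_smul_comm, smul_mul_assoc, pauli_mul_Zm_mul_conjTranspose, smul_smul, mul_comm b]

lemma Zm_isHermitian : Zm.IsHermitian := by
  ext i j; fin_cases i <;> fin_cases j <;> simp [Zm]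

/-- Flipping the sign of `b` cancels the cross terms `a b (Z φ + φ Z)`. -/
lemma Matrix.IsHermitian.conj_add_conj_neg {n : Type*} [Fintype n] [DecidableEq n]
    {Z : Matrix n n ℂ} (hZ : Z.IsHermitian) (a b : ℝ) (φ : Matrix n n ℂ) :
    ((a : ℂ) • 1 + (b : ℂ) • Z) * φ * ((a : ℂ) • 1 + (b : ℂ) • Z)ᴴ
        + ((a : ℂ) • 1 + (-b : ℂ) • Z) * φ * ((a : ℂ) • 1 + (-b : ℂ) • Z)ᴴ
      = ((2 * a ^ 2 : ℝ) : ℂ) • φ + ((2 * b ^ 2 : ℝ) : ℂ) • (Z * φ * Z) := by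
  simp only [conjTranspose_add, conjTranspose_smul, conjTranspose_one, hZ.eq, star_neg,
    Complex.star_def, Complex.conj_ofReal, add_mul, mul_add, smul_mul_assoc, mul_smul_comm,
    one_mul, mul_one, smul_add, smul_smul]
  push_cast
  module

/-- `K · diag(1, k)`, the coefficient matrix of `|Φ^k⟩`, written in the basis `I, Z`. -/
def phiKCoeff (k : ℝ) : Matrix (Fin 2) (Fin 2) ℂ :=
  (((1 + k) / (2 * √(1 + k ^ 2)) : ℝ) : ℂ) • 1 + (((1 - k) / (2 * √(1 + k ^ 2)) : ℝ) : ℂ) • Zm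

lemma ketPhiK_eq_vec (k : ℝ) : ketPhiK k = vec (phiKCoeff k) := by
  ext ⟨i, j⟩
  fin_cases i <;> fin_cases j <;> simp [ketPhiK, phiKCoeff, tens, e0, e1, Zm] <;> ring

theorem teleportation_with_phiK_is_dephasing_general (k : ℝ)
    (φ : Matrix (Fin 2) (Fin 2) ℂ) :
    Etel (PhiKD k) φ
      = (((k + 1) ^ 2 / (2 * (k ^ 2 + 1)) : ℝ) : ℂ) • φ
        + (((k - 1) ^ 2 / (2 * (k ^ 2 + 1)) : ℝ) : ℂ) • (Zm * φ * Zm) := by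
  set a : ℝ := (1 + k) / (2 * √(1 + k ^ 2))
  set b : ℝ := (1 - k) / (2 * √(1 + k ^ 2))
  have hcoeff : phiKCoeff k = (a : ℂ) • 1 + (b : ℂ) • Zm := rfl
  have ha : 2 * a ^ 2 = (k + 1) ^ 2 / (2 * (k ^ 2 + 1)) := by
    rw [div_pow, mul_pow, Real.sq_sqrt (by positivity)]; field_simp; ring
  have hb : 2 * b ^ 2 = (k - 1) ^ 2 / (2 * (k ^ 2 + 1)) := by
    rw [div_pow, mul_pow, Real.sq_sqrt (by positivity)]; field_simp; ring
  rw [PhiKD, ketPhiK_eq_vec, Etel_dens_vec, hcoeff, Fin.sum_univ_four]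
  simp only [pauli_mul_smul_one_add_smul_Zm_mul_conjTranspose, cons_val_zero, cons_val_one,
    cons_val_two, cons_val_three, head_cons, tail_cons, one_mul, neg_one_mul]
  rw [← ha, ← hb, ← Zm_isHermitian.conj_add_conj_neg a b φ]
  module

/-- Teleportation with Φ^k is a Pauli-Z dephasing channel. -/
theorem teleportation_with_phiK_is_dephasing (k : ℝ) (hk : 0 ≤ k)
    (φ : Matrix (Fin 2) (Fin 2) ℂ) :
    Etel (PhiKD k) φ
      = (((k + 1) ^ 2 / (2 * (k ^ 2 + 1)) : ℝ) : ℂ) • φ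
        + (((k - 1) ^ 2 / (2 * (k ^ 2 + 1)) : ℝ) : ℂ) • (Zm * φ * Zm) :=
  teleportation_with_phiK_is_dephasing_general k φ
end
end

section
/- Let k ≥ 0 be real and define the dephasing channel E(τ) = ((k+1)²/(2(k²+1))) τ + ((k−1)²/(2(k²+1))) Z τ Z on 2×2 complex matrices. Then for every 2×2 complex matrix ρ: ((k²+1)/(k+1)²) · Σ_{i∈{1,2}} U_i E(U_i† ρ U_i) U_i† = ρ + ((k−1)²/(k+1)²) · ((1/2) X ρ X + (1/2) Y ρ Y), where U₁ = H and U₂ = S·H. -/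
open Matrix Kronecker

noncomputable section

/-!
Conjugating `τ ↦ a • τ + b • (Z τ Z)` by a unitary `U` gives `ρ ↦ a • ρ + b • (P ρ P)` with
`P = U Z Uᴴ`. Since `H Z H† = X` and `(S H) Z (S H)† = S X S† = Y`, the sum over `U₁, U₂` is
`2a • ρ + b • (X ρ X + Y ρ Y)`, and the prefactor `(k² + 1) / (k + 1)²` normalizes `2a` to `1`.
-/

theorem conj_smul_add_smul_conj {R A : Type*} [CommSemiring R] [Semiring A] [Algebra R A]
    {U V : A} (hUV : U * V = 1) (P ρ : A) (a b : R) :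
    U * (a • (V * ρ * U) + b • (P * (V * ρ * U) * P)) * V
      = a • ρ + b • ((U * P * V) * ρ * (U * P * V)) := by
  have hρ : U * (V * ρ * U) * V = ρ := by
    rw [← mul_assoc, ← mul_assoc, hUV, one_mul, mul_assoc, hUV, mul_one]
  have hP : U * (P * (V * ρ * U) * P) * V = (U * P * V) * ρ * (U * P * V) := by
    simp only [mul_assoc]
  rw [mul_add, add_mul, mul_smul_comm, smul_mul_assoc, mul_smul_comm, smul_mul_assoc, hρ, hP]

lemma conj_mul_eq_conj_conj {n α : Type*} [Fintype n] [CommSemiring α] [StarRing α]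
    (U W P : Matrix n n α) : (U * W) * P * (U * W)ᴴ = U * (W * P * Wᴴ) * Uᴴ := by
  simp only [conjTranspose_mul, Matrix.mul_assoc]

lemma ofReal_sqrt_two_inv_mul_self : ((√2 : ℝ) : ℂ)⁻¹ * ((√2 : ℝ) : ℂ)⁻¹ = 2⁻¹ := by
  rw [← mul_inv, ← Complex.ofReal_mul, Real.mul_self_sqrt zero_le_two, Complex.ofReal_ofNat]

lemma Hm_mem_unitaryGroup : Hm ∈ unitaryGroup (Fin 2) ℂ := by
  rw [mem_unitaryGroup_iff, star_eq_conjTranspose]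
  ext i j
  fin_cases i <;> fin_cases j <;>
    simp [Hm, Matrix.mul_apply, Fin.sum_univ_succ, ofReal_sqrt_two_inv_mul_self] <;> norm_num

lemma Sm_mem_unitaryGroup : Sm ∈ unitaryGroup (Fin 2) ℂ := by
  rw [mem_unitaryGroup_iff, star_eq_conjTranspose]
  ext i j
  fin_cases i <;> fin_cases j <;> simp [Sm, Matrix.mul_apply, Fin.sum_univ_succ]

lemma Hm_mul_Zm_mul_conjTranspose : Hm * Zm * Hmᴴ = Xm := by
  ext i j
  fin_cases i <;> fin_cases j <;>
    simp [Hm, Zm, Xm, Matrix.mul_apply, Fin.sum_univ_succ, ofReal_sqrt_two_inv_mul_self] <;> norm_num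

lemma Sm_mul_Xm_mul_conjTranspose : Sm * Xm * Smᴴ = Ym := by
  ext i j
  fin_cases i <;> fin_cases j <;> simp [Sm, Xm, Ym, Matrix.mul_apply, Fin.sum_univ_succ]

/-- Conjugating the dephasing channel by U₁ = H, U₂ = S·H and summing. -/
theorem twirled_dephasing (k : ℝ) (hk : 0 ≤ k)
    (E : Matrix (Fin 2) (Fin 2) ℂ → Matrix (Fin 2) (Fin 2) ℂ)
    (hE : ∀ τ, E τ = (((k + 1) ^ 2 / (2 * (k ^ 2 + 1)) : ℝ) : ℂ) • τ
        + (((k - 1) ^ 2 / (2 * (k ^ 2 + 1)) : ℝ) : ℂ) • (Zm * τ * Zm))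
    (ρ : Matrix (Fin 2) (Fin 2) ℂ) :
    (((k ^ 2 + 1) / (k + 1) ^ 2 : ℝ) : ℂ) •
        (Hm * E (Hmᴴ * ρ * Hm) * Hmᴴ
          + (Sm * Hm) * E ((Sm * Hm)ᴴ * ρ * (Sm * Hm)) * (Sm * Hm)ᴴ)
      = ρ + (((k - 1) ^ 2 / (k + 1) ^ 2 : ℝ) : ℂ) •
          ((1 / 2 : ℂ) • (Xm * ρ * Xm) + (1 / 2 : ℂ) • (Ym * ρ * Ym)) := by
  have hH : Hm * Hmᴴ = 1 := mem_unitaryGroup_iff.mp Hm_mem_unitaryGroup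
  have hSH : Sm * Hm * (Sm * Hm)ᴴ = 1 :=
    mem_unitaryGroup_iff.mp (mul_mem Sm_mem_unitaryGroup Hm_mem_unitaryGroup)
  have hSHZ : Sm * Hm * Zm * (Sm * Hm)ᴴ = Ym := by
    rw [conj_mul_eq_conj_conj, Hm_mul_Zm_mul_conjTranspose, Sm_mul_Xm_mul_conjTranspose]
  rw [hE, hE, conj_smul_add_smul_conj hH, conj_smul_add_smul_conj hSH,
    Hm_mul_Zm_mul_conjTranspose, hSHZ]
  have hk1 : (k : ℂ) + 1 ≠ 0 := by exact_mod_cast (by positivity : k + 1 ≠ 0)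
  have hk2 : (k : ℂ) ^ 2 + 1 ≠ 0 := by exact_mod_cast (by positivity : k ^ 2 + 1 ≠ 0)
  match_scalars <;> field_simp
  ring
end
end
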